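/- arXiv:1912.13418 — 2 statements merged into one kernel-verified Lean document; each statement's English description precedes it below -/
import Mathlib

section
/- Let (A,·,α) be a regular finite-dimensional Hom-pre-Lie algebra and r ∈ A⊗A symmetric (σ(r) = r) satisfying r^♯∘(α^{-1})* = α∘r^♯ and [[r,r]] = 0. Then (A*, ∘, (α^{-1})*) is a Hom-pre-Lie algebra, where ξ∘η = ad^⋆_{r^♯(ξ)}η − R^⋆_{r^♯(η)}ξ. -/
open TensorProduct LinearMap Module

section Defs

variable {K : Type*} [Field K]

section Basic
variable {A : Type*} [AddCommGroup A] [Module K A]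
variable {B : Type*} [AddCommGroup B] [Module K B]
variable {V : Type*} [AddCommGroup V] [Module K V]

/-- A Hom-pre-Lie algebra structure. -/
def IsHomPreLie (m : A →ₗ[K] A →ₗ[K] A) (α : A →ₗ[K] A) : Prop :=
  (∀ x y, α (m x y) = m (α x) (α y)) ∧
  ∀ x y z, m (m x y) (α z) - m (α x) (m y z) = m (m y x) (α z) - m (α y) (m x z)

/-- A Hom-Lie algebra structure. -/
def IsHomLie (br : A →ₗ[K] A →ₗ[K] A) (φ : A →ₗ[K] A) : Prop :=
  (∀ x y, br x y = - br y x) ∧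
  (∀ x y, φ (br x y) = br (φ x) (φ y)) ∧
  ∀ x y z, br (φ x) (br y z) + br (φ y) (br z x) + br (φ z) (br x y) = 0

/-- A representation of a Hom-Lie algebra on `V` with respect to `β`. -/
def IsHomLieRep (br : A →ₗ[K] A →ₗ[K] A) (φ : A →ₗ[K] A)
    (β : Module.End K V) (ρ : A →ₗ[K] Module.End K V) : Prop :=
  (∀ x, ρ (φ x) * β = β * ρ x) ∧
  ∀ x y, ρ (br x y) * β = ρ (φ x) * ρ y - ρ (φ y) * ρ x

/-- A representation of a Hom-pre-Lie algebra on `V` with respect to `β`. -/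
def IsHomPreLieRep (m : A →ₗ[K] A →ₗ[K] A) (α : A →ₗ[K] A)
    (β : Module.End K V) (ρ μ : A →ₗ[K] Module.End K V) : Prop :=
  IsHomLieRep (m - m.flip) α β ρ ∧
  (∀ x, β * μ x = μ (α x) * β) ∧
  ∀ x y, μ (α y) * μ x - μ (m x y) * β = μ (α y) * ρ x - ρ (α x) * μ y

/-- A 1-cocycle of a Hom-Lie algebra with respect to a representation. -/
def IsHomLieCocycle (br : A →ₗ[K] A →ₗ[K] A) (φ : A →ₗ[K] A)
    (ρ : A →ₗ[K] Module.End K V) (δ : A →ₗ[K] V) : Prop :=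
  ∀ x y, δ (br x y) = ρ (φ x) (δ y) - ρ (φ y) (δ x)

/-- A matched pair of Hom-Lie algebras. -/
def IsHomLieMatchedPair (brA : A →ₗ[K] A →ₗ[K] A) (φA : A →ₗ[K] A)
    (brB : B →ₗ[K] B →ₗ[K] B) (φB : B →ₗ[K] B)
    (ρ : A →ₗ[K] Module.End K B) (ρ' : B →ₗ[K] Module.End K A) : Prop :=
  IsHomLie brA φA ∧ IsHomLie brB φB ∧
  IsHomLieRep brA φA φB ρ ∧ IsHomLieRep brB φB φA ρ' ∧
  (∀ x y x', ρ' (φB x') (brA x y) =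
    brA (ρ' x' x) (φA y) + brA (φA x) (ρ' x' y) + ρ' (ρ y x') (φA x) - ρ' (ρ x x') (φA y)) ∧
  ∀ x x' y', ρ (φA x) (brB x' y') =
    brB (ρ x x') (φB y') + brB (φB x') (ρ x y') + ρ (ρ' y' x) (φB x') - ρ (ρ' x' x) (φB y')

/-- A matched pair of Hom-pre-Lie algebras. -/
def IsHomPreLieMatchedPair (mA : A →ₗ[K] A →ₗ[K] A) (αA : A →ₗ[K] A)
    (mB : B →ₗ[K] B →ₗ[K] B) (αB : B →ₗ[K] B)
    (lA rA : A →ₗ[K] Module.End K B) (lB rB : B →ₗ[K] Module.End K A) : Prop :=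
  IsHomPreLie mA αA ∧ IsHomPreLie mB αB ∧
  IsHomPreLieRep mA αA αB lA rA ∧ IsHomPreLieRep mB αB αA lB rB ∧
  (∀ (x : A) (a b : B), rA (αA x) (mB a b - mB b a) =
    rA (lB b x) (αB a) - rA (lB a x) (αB b) + mB (αB a) (rA x b) - mB (αB b) (rA x a)) ∧
  (∀ (x : A) (a b : B), lA (αA x) (mB a b) =
    -(lA (lB a x - rB a x) (αB b)) + mB (lA x a - rA x a) (αB b)
      + rA (rB b x) (αB a) + mB (αB a) (lA x b)) ∧
  (∀ (a : B) (x y : A), rB (αB a) (mA x y - mA y x) =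
    rB (lA y a) (αA x) - rB (lA x a) (αA y) + mA (αA x) (rB a y) - mA (αA y) (rB a x)) ∧
  ∀ (a : B) (x y : A), lB (αB a) (mA x y) =
    -(lB (lA x a - rA x a) (αA y)) + mA (lB a x - rB a x) (αA y)
      + rB (rA y a) (αA x) + mA (αA x) (lB a y)

/-- A Hom-L-dendriform algebra structure. -/
def IsHomLDendriform (tr tl : A →ₗ[K] A →ₗ[K] A) (α : A →ₗ[K] A) : Prop :=
  (∀ x y, α (tr x y) = tr (α x) (α y)) ∧
  (∀ x y, α (tl x y) = tl (α x) (α y)) ∧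
  (∀ x y z, tr (tr x y) (α z) + tr (tl x y) (α z) + tr (α y) (tr x z)
      - tr (tl y x) (α z) - tr (tr y x) (α z) - tr (α x) (tr y z) = 0) ∧
  ∀ x y z, tl (tr x y) (α z) + tl (α y) (tr x z) + tl (α y) (tl x z)
      - tl (tl y x) (α z) - tr (α x) (tl y z) = 0

/-- A Hom-O-operator on a Hom-pre-Lie algebra with respect to a representation. -/
def IsHomOOperator (m : A →ₗ[K] A →ₗ[K] A) (α : A →ₗ[K] A)
    (β : V ≃ₗ[K] V) (ρ μ : A →ₗ[K] Module.End K V) (T : V →ₗ[K] A) : Prop :=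
  (∀ v, T (β v) = α (T v)) ∧
  ∀ u v, m (T u) (T v) = T (ρ (T (β.symm u)) v + μ (T (β.symm v)) u)

/-- A quadratic Hom-pre-Lie algebra. -/
def IsQuadraticHomPreLie (m : A →ₗ[K] A →ₗ[K] A) (α : A →ₗ[K] A)
    (ω : A →ₗ[K] A →ₗ[K] K) : Prop :=
  IsHomPreLie m α ∧
  (∀ x y, ω x y = - ω y x) ∧
  (∀ x, (∀ y, ω x y = 0) → x = 0) ∧
  (∀ x y, ω (α x) (α y) = ω x y) ∧
  ∀ x y z, ω (m x y) (α z) = - ω (α y) (m x z - m z x)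

/-- A Manin triple for Hom-pre-Lie algebras. -/
def IsManinTriple (m : A →ₗ[K] A →ₗ[K] A) (α : A →ₗ[K] A)
    (ω : A →ₗ[K] A →ₗ[K] K) (A1 A2 : Submodule K A) : Prop :=
  IsQuadraticHomPreLie m α ω ∧
  (∀ x ∈ A1, ∀ y ∈ A1, m x y ∈ A1) ∧ (∀ x ∈ A1, α x ∈ A1) ∧
  (∀ x ∈ A2, ∀ y ∈ A2, m x y ∈ A2) ∧ (∀ x ∈ A2, α x ∈ A2) ∧
  (∀ x ∈ A1, ∀ y ∈ A1, ω x y = 0) ∧ (∀ x ∈ A2, ∀ y ∈ A2, ω x y = 0) ∧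
  IsCompl A1 A2

/-- A Hessian structure on a Hom-pre-Lie algebra. -/
def IsHessian (m : A →ₗ[K] A →ₗ[K] A) (α : A →ₗ[K] A) (Bf : A →ₗ[K] A →ₗ[K] K) : Prop :=
  (∀ x y, Bf x y = Bf y x) ∧ (∀ x, (∀ y, Bf x y = 0) → x = 0) ∧
  (∀ x y, Bf (α x) (α y) = Bf x y) ∧
  ∀ x y z, Bf (m x y) (α z) - Bf (α x) (m y z) = Bf (m y x) (α z) - Bf (α y) (m x z)

end Basic

section Transpose
variable {X Y : Type*} [AddCommGroup X] [Module K X] [AddCommGroup Y] [Module K Y]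

/-- The transpose of linear maps, as a bundled linear map. -/
noncomputable def transposeH : (X →ₗ[K] Y) →ₗ[K] (Y →ₗ[K] K) →ₗ[K] (X →ₗ[K] K) :=
  (LinearMap.llcomp K X Y K).flip

@[simp] theorem transposeH_apply (f : X →ₗ[K] Y) (ξ : Y →ₗ[K] K) (x : X) :
    transposeH f ξ x = ξ (f x) := rfl

end Transpose

/-- The dual space `A →ₗ[K] K` as an additive group (an instance the current
instance search no longer finds inside nested linear-map types). -/
instance dualAddCommGroupH {A : Type*} [AddCommGroup A] [Module K A] :
    AddCommGroup (A →ₗ[K] K) :=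
  LinearMap.addCommGroup

section StarOps
variable {A : Type*} [AddCommGroup A] [Module K A]

/-- The evaluation map into the double dual. -/
noncomputable def evalH : A →ₗ[K] ((A →ₗ[K] K) →ₗ[K] K) :=
  (LinearMap.id : (A →ₗ[K] K) →ₗ[K] (A →ₗ[K] K)).flip

/-- The operator `L^⋆` : `⟨L^⋆_x ξ, y⟩ = -⟨ξ, α⁻¹(x) · α⁻²(y)⟩`. -/
noncomputable def Lstar (m : A →ₗ[K] A →ₗ[K] A) (α : A ≃ₗ[K] A) :
    A →ₗ[K] (A →ₗ[K] K) →ₗ[K] (A →ₗ[K] K) :=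
  -(transposeH ∘ₗ
      (LinearMap.lcomp K A ((α ^ (-2 : ℤ) : A ≃ₗ[K] A) : A →ₗ[K] A)) ∘ₗ m ∘ₗ
      ((α⁻¹ : A ≃ₗ[K] A) : A →ₗ[K] A))

/-- The operator `R^⋆` : `⟨R^⋆_x ξ, y⟩ = -⟨ξ, α⁻²(y) · α⁻¹(x)⟩`. -/
noncomputable def Rstar (m : A →ₗ[K] A →ₗ[K] A) (α : A ≃ₗ[K] A) :
    A →ₗ[K] (A →ₗ[K] K) →ₗ[K] (A →ₗ[K] K) :=
  -(transposeH ∘ₗ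
      (LinearMap.lcomp K A ((α ^ (-2 : ℤ) : A ≃ₗ[K] A) : A →ₗ[K] A)) ∘ₗ m.flip ∘ₗ
      ((α⁻¹ : A ≃ₗ[K] A) : A →ₗ[K] A))

/-- The operator `ad^⋆ = L^⋆ - R^⋆`. -/
noncomputable def adStar (m : A →ₗ[K] A →ₗ[K] A) (α : A ≃ₗ[K] A) :
    A →ₗ[K] (A →ₗ[K] K) →ₗ[K] (A →ₗ[K] K) :=
  Lstar m α - Rstar m α

variable [FiniteDimensional K A]

/-- The inverse of the double-dual evaluation isomorphism. -/
noncomputable def evalInvH : ((A →ₗ[K] K) →ₗ[K] K) →ₗ[K] A :=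
  (Module.evalEquiv K A).symm.toLinearMap

/-- The operator `ℒ^⋆` : `⟨η, ℒ^⋆_ξ x⟩ = -⟨(α⁻¹)*(ξ) ∘ η, α²(x)⟩`. -/
noncomputable def Lcurly
    (mc : (A →ₗ[K] K) →ₗ[K] (A →ₗ[K] K) →ₗ[K] (A →ₗ[K] K))
    (α : A ≃ₗ[K] A) : (A →ₗ[K] K) →ₗ[K] A →ₗ[K] A :=
  -((LinearMap.llcomp K A ((A →ₗ[K] K) →ₗ[K] K) A evalInvH) ∘ₗ
      (LinearMap.lcomp K ((A →ₗ[K] K) →ₗ[K] K)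
        (evalH ∘ₗ ((α ^ (2 : ℤ) : A ≃ₗ[K] A) : A →ₗ[K] A))) ∘ₗ
      transposeH ∘ₗ mc ∘ₗ
      (transposeH ((α⁻¹ : A ≃ₗ[K] A) : A →ₗ[K] A)))

/-- The operator `ℛ^⋆` : `⟨η, ℛ^⋆_ξ x⟩ = -⟨η ∘ (α⁻¹)*(ξ), α²(x)⟩`. -/
noncomputable def Rcurly
    (mc : (A →ₗ[K] K) →ₗ[K] (A →ₗ[K] K) →ₗ[K] (A →ₗ[K] K))
    (α : A ≃ₗ[K] A) : (A →ₗ[K] K) →ₗ[K] A →ₗ[K] A :=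
  -((LinearMap.llcomp K A ((A →ₗ[K] K) →ₗ[K] K) A evalInvH) ∘ₗ
      (LinearMap.lcomp K ((A →ₗ[K] K) →ₗ[K] K)
        (evalH ∘ₗ ((α ^ (2 : ℤ) : A ≃ₗ[K] A) : A →ₗ[K] A))) ∘ₗ
      transposeH ∘ₗ mc.flip ∘ₗ
      (transposeH ((α⁻¹ : A ≃ₗ[K] A) : A →ₗ[K] A)))

/-- The operator `𝔞𝔡^⋆ = ℒ^⋆ - ℛ^⋆`. -/
noncomputable def adCurly
    (mc : (A →ₗ[K] K) →ₗ[K] (A →ₗ[K] K) →ₗ[K] (A →ₗ[K] K))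
    (α : A ≃ₗ[K] A) : (A →ₗ[K] K) →ₗ[K] A →ₗ[K] A :=
  Lcurly mc α - Rcurly mc α

end StarOps

section Tensor
variable {A : Type*} [AddCommGroup A] [Module K A]

/-- The pairing of `ξ ⊗ η` with elements of `A ⊗ A`. -/
noncomputable def tpair (ξ η : A →ₗ[K] K) : (A ⊗[K] A) →ₗ[K] K :=
  (TensorProduct.lid K K).toLinearMap ∘ₗ TensorProduct.map ξ η

/-- The pairing of `x ⊗ y` with elements of `A* ⊗ A*`. -/
noncomputable def dpair (x y : A) : ((A →ₗ[K] K) ⊗[K] (A →ₗ[K] K)) →ₗ[K] K :=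
  (TensorProduct.lid K K).toLinearMap ∘ₗ TensorProduct.map (evalH x) (evalH y)

/-- Pairing the first two tensor components of `A ⊗ A ⊗ A` with `ξ` and `η`. -/
noncomputable def pair12 (ξ η : A →ₗ[K] K) : (A ⊗[K] (A ⊗[K] A)) →ₗ[K] A :=
  (TensorProduct.lid K A).toLinearMap ∘ₗ
    TensorProduct.map ξ ((TensorProduct.lid K A).toLinearMap ∘ₗ
      TensorProduct.map η LinearMap.id)

/-- The map `r^♯ : A* → A` associated to `r ∈ A ⊗ A`, `⟨r^♯(ξ), η⟩ = ⟨r, ξ ⊗ η⟩`. -/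
noncomputable def rSharpL (r : A ⊗[K] A) : (A →ₗ[K] K) →ₗ[K] A :=
  ((LinearMap.llcomp K (A ⊗[K] A) (K ⊗[K] A) A (TensorProduct.lid K A).toLinearMap) ∘ₗ
    (LinearMap.rTensorHom A)).flip r

/-- The bilinear operation producing `[[r,r]]` out of `r ⊗ r`. -/
noncomputable def homPreLieBB (m : A →ₗ[K] A →ₗ[K] A) (α : A →ₗ[K] A) :
    ((A ⊗[K] A) ⊗[K] (A ⊗[K] A)) →ₗ[K] (A ⊗[K] (A ⊗[K] A)) :=
  (TensorProduct.assoc K A A A).toLinearMap ∘ₗ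
      (TensorProduct.map (TensorProduct.map α α) (TensorProduct.lift m)) ∘ₗ
      (TensorProduct.tensorTensorTensorComm K A A A A).toLinearMap
    - (TensorProduct.map α (TensorProduct.map (TensorProduct.lift (m.flip - m)) α)) ∘ₗ
      (LinearMap.lTensor A ((TensorProduct.assoc K A A A).symm.toLinearMap)) ∘ₗ
      (TensorProduct.assoc K A A (A ⊗[K] A)).toLinearMap
    - (TensorProduct.map (TensorProduct.lift m)
        ((TensorProduct.map α α) ∘ₗ (TensorProduct.comm K A A).toLinearMap)) ∘ₗ
      (TensorProduct.tensorTensorTensorComm K A A A A).toLinearMap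

/-- The element `[[r,r]] ∈ A ⊗ A ⊗ A`. -/
noncomputable def bracket2 (m : A →ₗ[K] A →ₗ[K] A) (α : A →ₗ[K] A) (r : A ⊗[K] A) :
    A ⊗[K] (A ⊗[K] A) :=
  homPreLieBB m α (r ⊗ₜ[K] r)

/-- A Hom-s-matrix in a Hom-pre-Lie algebra. -/
def IsHomSMatrix {B : Type*} [AddCommGroup B] [Module K B]
    (mB : B →ₗ[K] B →ₗ[K] B) (γ : B ≃ₗ[K] B) (r : B ⊗[K] B) : Prop :=
  (TensorProduct.comm K B B) r = r ∧
  (∀ ξ, rSharpL r (ξ ∘ₗ ((γ⁻¹ : B ≃ₗ[K] B) : B →ₗ[K] B)) = γ (rSharpL r ξ)) ∧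
  bracket2 mB (γ : B →ₗ[K] B) r = 0

/-- The representation `x ↦ F(x) ⊗ c + c ⊗ G(x)` on `Y ⊗ Y`. -/
noncomputable def tensorRep {Y : Type*} [AddCommGroup Y] [Module K Y]
    (F G : A →ₗ[K] Y →ₗ[K] Y) (c : Y →ₗ[K] Y) :
    A →ₗ[K] Module.End K (Y ⊗[K] Y) :=
  (LinearMap.mulRight K (LinearMap.lTensor Y c)) ∘ₗ (LinearMap.rTensorHom Y) ∘ₗ F
    + (LinearMap.mulLeft K (LinearMap.rTensor Y c)) ∘ₗ (LinearMap.lTensorHom Y) ∘ₗ G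

/-- The dual map `ρ^⋆` : `⟨ρ^⋆(x)ξ, u⟩ = -⟨(β⁻²)*(ξ), ρ(α(x))u⟩`. -/
noncomputable def rhoStar {V : Type*} [AddCommGroup V] [Module K V]
    (α : A →ₗ[K] A) (β : V ≃ₗ[K] V) (ρ : A →ₗ[K] Module.End K V) :
    A →ₗ[K] (V →ₗ[K] K) →ₗ[K] (V →ₗ[K] K) :=
  -(transposeH ∘ₗ
      (LinearMap.mulLeft K (((β ^ (-2 : ℤ) : V ≃ₗ[K] V) : V →ₗ[K] V) : Module.End K V)) ∘ₗ
      ρ ∘ₗ α)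

/-- The semidirect product Hom-pre-Lie product on `A × W`. -/
noncomputable def sdProduct {W : Type*} [AddCommGroup W] [Module K W]
    (m : A →ₗ[K] A →ₗ[K] A) (l r : A →ₗ[K] W →ₗ[K] W) :
    (A × W) →ₗ[K] (A × W) →ₗ[K] (A × W) :=
  (m.compl₁₂ (LinearMap.fst K A W) (LinearMap.fst K A W)).compr₂ (LinearMap.inl K A W)
    + ((l.compl₁₂ (LinearMap.fst K A W) (LinearMap.snd K A W))
        + (r.compl₁₂ (LinearMap.fst K A W) (LinearMap.snd K A W)).flip).compr₂
      (LinearMap.inr K A W)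

end Tensor

section Std
variable (K)
variable (A : Type*) [AddCommGroup A] [Module K A]

/-- The standard bilinear form `ω̄(x+ξ, y+η) = ⟨ξ,y⟩ - ⟨η,x⟩` on `A × A*`. -/
noncomputable def stdOmega :
    (A × (A →ₗ[K] K)) →ₗ[K] (A × (A →ₗ[K] K)) →ₗ[K] K :=
  (LinearMap.id : (A →ₗ[K] K) →ₗ[K] (A →ₗ[K] K)).compl₁₂
      (LinearMap.snd K A (A →ₗ[K] K)) (LinearMap.fst K A (A →ₗ[K] K))
    - ((LinearMap.id : (A →ₗ[K] K) →ₗ[K] (A →ₗ[K] K)).compl₁₂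
      (LinearMap.snd K A (A →ₗ[K] K)) (LinearMap.fst K A (A →ₗ[K] K))).flip

variable {K A}

/-- The standard product `⋄` on `A × A*`:
`(x+ξ) ⋄ (y+η) = x·y + 𝔞𝔡^⋆_ξ y - ℛ^⋆_η x + ξ∘η + ad^⋆_x η - R^⋆_y ξ`. -/
noncomputable def stdDiamond [FiniteDimensional K A]
    (m : A →ₗ[K] A →ₗ[K] A) (α : A ≃ₗ[K] A)
    (mc : (A →ₗ[K] K) →ₗ[K] (A →ₗ[K] K) →ₗ[K] (A →ₗ[K] K)) :
    (A × (A →ₗ[K] K)) →ₗ[K] (A × (A →ₗ[K] K)) →ₗ[K] (A × (A →ₗ[K] K)) :=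
  (m.compl₁₂ (LinearMap.fst K A (A →ₗ[K] K)) (LinearMap.fst K A (A →ₗ[K] K))
      + (adCurly mc α).compl₁₂ (LinearMap.snd K A (A →ₗ[K] K)) (LinearMap.fst K A (A →ₗ[K] K))
      - ((Rcurly mc α).compl₁₂ (LinearMap.snd K A (A →ₗ[K] K))
          (LinearMap.fst K A (A →ₗ[K] K))).flip).compr₂
      (LinearMap.inl K A (A →ₗ[K] K))
    + (mc.compl₁₂ (LinearMap.snd K A (A →ₗ[K] K)) (LinearMap.snd K A (A →ₗ[K] K))
      + (adStar m α).compl₁₂ (LinearMap.fst K A (A →ₗ[K] K)) (LinearMap.snd K A (A →ₗ[K] K))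
      - ((Rstar m α).compl₁₂ (LinearMap.fst K A (A →ₗ[K] K))
          (LinearMap.snd K A (A →ₗ[K] K))).flip).compr₂
      (LinearMap.inr K A (A →ₗ[K] K))

end Std

section Bialg
variable {A : Type*} [AddCommGroup A] [Module K A]

/-- A Hom-pre-Lie bialgebra: the two 1-cocycle conditions on the
comultiplications `φ*` and `ψ*`. -/
def IsHomPreLieBialgebra (m : A →ₗ[K] A →ₗ[K] A) (α : A ≃ₗ[K] A)
    (mc : (A →ₗ[K] K) →ₗ[K] (A →ₗ[K] K) →ₗ[K] (A →ₗ[K] K))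
    (φs : A →ₗ[K] A ⊗[K] A)
    (ψs : (A →ₗ[K] K) →ₗ[K] (A →ₗ[K] K) ⊗[K] (A →ₗ[K] K)) : Prop :=
  IsHomLieCocycle (m - m.flip) (α : A →ₗ[K] A)
    (tensorRep (m ∘ₗ ((α ^ (-2 : ℤ) : A ≃ₗ[K] A) : A →ₗ[K] A))
      ((m - m.flip) ∘ₗ ((α ^ (-2 : ℤ) : A ≃ₗ[K] A) : A →ₗ[K] A))
      (α : A →ₗ[K] A)) φs ∧
  IsHomLieCocycle (mc - mc.flip) (transposeH ((α⁻¹ : A ≃ₗ[K] A) : A →ₗ[K] A))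
    (tensorRep (mc ∘ₗ transposeH ((α ^ (2 : ℤ) : A ≃ₗ[K] A) : A →ₗ[K] A))
      ((mc - mc.flip) ∘ₗ transposeH ((α ^ (2 : ℤ) : A ≃ₗ[K] A) : A →ₗ[K] A))
      (transposeH ((α⁻¹ : A ≃ₗ[K] A) : A →ₗ[K] A))) ψs

end Bialg

end Defs
section Stmt7Aux
variable {K : Type*} [Field K] {A : Type*} [AddCommGroup A] [Module K A]

theorem rSharpL_tmul' (x y : A) (ξ : A →ₗ[K] K) : rSharpL (x ⊗ₜ[K] y) ξ = ξ x • y := by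
  simp [rSharpL]

theorem rSharpL_add' (s t : A ⊗[K] A) (ξ : A →ₗ[K] K) :
    rSharpL (s + t) ξ = rSharpL s ξ + rSharpL t ξ := by simp [rSharpL]

theorem rSharpL_zero' (ξ : A →ₗ[K] K) : rSharpL (0 : A ⊗[K] A) ξ = 0 := by simp [rSharpL]

theorem rSharpL_symm (s : A ⊗[K] A) (ξ η : A →ₗ[K] K) :
    η (rSharpL s ξ) = ξ (rSharpL ((TensorProduct.comm K A A) s) η) := by
  induction s using TensorProduct.induction_on with
  | zero => simp [rSharpL]
  | tmul x y => simp [rSharpL_tmul', comm_tmul, map_smul, smul_eq_mul, mul_comm]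
  | add u v hu hv => simp only [map_add, rSharpL_add', hu, hv]

theorem zpow_neg_two_apply (α : A ≃ₗ[K] A) (y : A) :
    (α ^ (-2 : ℤ) : A ≃ₗ[K] A) y = α⁻¹ (α⁻¹ y) := by
  have h : (α ^ (-2 : ℤ)) = α⁻¹ * α⁻¹ := by group
  rw [h]; rfl

theorem key_expand (m : A →ₗ[K] A →ₗ[K] A) (α : A →ₗ[K] A) (ξ η ζ : A →ₗ[K] K)
    (s t : A ⊗[K] A) :
    ζ (pair12 ξ η (homPreLieBB m α (s ⊗ₜ[K] t))) =
      ζ (m (rSharpL s (ξ ∘ₗ α)) (rSharpL t (η ∘ₗ α)))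
      - η (m (rSharpL ((TensorProduct.comm K A A) t) (ζ ∘ₗ α)) (rSharpL s (ξ ∘ₗ α)))
      + η (m (rSharpL s (ξ ∘ₗ α)) (rSharpL ((TensorProduct.comm K A A) t) (ζ ∘ₗ α)))
      - ξ (m (rSharpL ((TensorProduct.comm K A A) s) (ζ ∘ₗ α))
            (rSharpL ((TensorProduct.comm K A A) t) (η ∘ₗ α))) := by
  induction s using TensorProduct.induction_on with
  | zero => simp [rSharpL_zero', TensorProduct.zero_tmul]
  | add u v hu hv =>
      simp only [TensorProduct.add_tmul, map_add, rSharpL_add', LinearMap.add_apply,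
        LinearMap.map_add₂] at hu hv ⊢
      rw [hu, hv]; ring
  | tmul x y =>
      induction t using TensorProduct.induction_on with
      | zero => simp [rSharpL_zero', TensorProduct.tmul_zero]
      | add u v hu hv =>
          simp only [TensorProduct.tmul_add, map_add, rSharpL_add', LinearMap.add_apply,
            LinearMap.map_add₂] at hu hv ⊢
          rw [hu, hv]; ring
      | tmul x' y' =>
          have hBB : homPreLieBB m α ((x ⊗ₜ[K] y) ⊗ₜ[K] (x' ⊗ₜ[K] y')) =
              α x ⊗ₜ[K] (α x' ⊗ₜ[K] m y y') - α x ⊗ₜ[K] ((m x' y - m y x') ⊗ₜ[K] α y')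
                - m x x' ⊗ₜ[K] (α y' ⊗ₜ[K] α y) := by
            simp [homPreLieBB, TensorProduct.tensorTensorTensorComm_tmul, sub_tmul, tmul_sub]
          rw [hBB]
          simp only [map_sub, comm_tmul, rSharpL_tmul']
          simp only [pair12, LinearMap.coe_comp, Function.comp_apply, LinearEquiv.coe_coe,
            TensorProduct.map_tmul, TensorProduct.lid_tmul, LinearMap.id_coe, id_eq, map_smul,
            smul_eq_mul, LinearMap.map_smul₂, LinearMap.smul_apply, TensorProduct.tmul_sub,
            TensorProduct.sub_tmul, map_sub, LinearMap.sub_apply]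
          ring

end Stmt7Aux

universe u v

theorem stmt_7 {K : Type*} [Field K] {A : Type*} [AddCommGroup A] [Module K A]
    [FiniteDimensional K A]
    (m : A →ₗ[K] A →ₗ[K] A) (α : A ≃ₗ[K] A)
    (h : IsHomPreLie m (α : A →ₗ[K] A))
    (r : A ⊗[K] A)
    (hsym : (TensorProduct.comm K A A) r = r)
    (hr : ∀ ξ : (A →ₗ[K] K), rSharpL r (ξ ∘ₗ ((α⁻¹ : A ≃ₗ[K] A) : A →ₗ[K] A)) = α (rSharpL r ξ))
    (hrr : bracket2 m (α : A →ₗ[K] A) r = 0) :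
    IsHomPreLie ((adStar m α) ∘ₗ rSharpL r - ((Rstar m α) ∘ₗ rSharpL r).flip)
      (transposeH ((α⁻¹ : A ≃ₗ[K] A) : A →ₗ[K] A)) := by
  obtain ⟨hmul, hpre⟩ := h
  set M : (A →ₗ[K] K) →ₗ[K] (A →ₗ[K] K) →ₗ[K] (A →ₗ[K] K) :=
    (adStar m α) ∘ₗ rSharpL r - ((Rstar m α) ∘ₗ rSharpL r).flip with hMdef
  have hinv : ∀ x : A, α ((α⁻¹ : A ≃ₗ[K] A) x) = x := fun x => α.apply_symm_apply x
  have hinv' : ∀ x : A, (α⁻¹ : A ≃ₗ[K] A) (α x) = x := fun x => α.symm_apply_apply x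
  have hmul' : ∀ x y : A, α (m x y) = m (α x) (α y) := by
    intro x y
    have h1 := hmul x y
    simpa only [LinearEquiv.coe_coe] using h1
  have hβm : ∀ x y : A, (α⁻¹ : A ≃ₗ[K] A) (m x y) = m (α⁻¹ x) (α⁻¹ y) := by
    intro x y
    apply α.injective
    rw [hinv, hmul', hinv, hinv]
  -- T(μ ∘ α) = α⁻¹ (T μ)
  have hTa : ∀ μ : A →ₗ[K] K, rSharpL r (μ ∘ₗ (α : A →ₗ[K] A)) = α⁻¹ (rSharpL r μ) := by
    intro μ
    have h1 : (μ ∘ₗ (α : A →ₗ[K] A)) ∘ₗ ((α⁻¹ : A ≃ₗ[K] A) : A →ₗ[K] A) = μ := by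
      ext z; simp [hinv]
    have h2 := hr (μ ∘ₗ (α : A →ₗ[K] A))
    rw [h1] at h2
    rw [h2, hinv']
  have hsymm : ∀ ξ η : A →ₗ[K] K, η (rSharpL r ξ) = ξ (rSharpL r η) := by
    intro ξ η; rw [rSharpL_symm, hsym]
  -- key identity from hrr
  have hkey : ∀ ξ η ζ : A →ₗ[K] K,
      ζ (m (α⁻¹ (rSharpL r ξ)) (α⁻¹ (rSharpL r η)))
        - η (m (α⁻¹ (rSharpL r ζ)) (α⁻¹ (rSharpL r ξ)))
        + η (m (α⁻¹ (rSharpL r ξ)) (α⁻¹ (rSharpL r ζ)))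
        - ξ (m (α⁻¹ (rSharpL r ζ)) (α⁻¹ (rSharpL r η))) = 0 := by
    intro ξ η ζ
    have hk := key_expand m (α : A →ₗ[K] A) ξ η ζ r r
    rw [hsym] at hk
    rw [hTa, hTa, hTa] at hk
    have h0 : homPreLieBB m (α : A →ₗ[K] A) (r ⊗ₜ[K] r) = 0 := hrr
    rw [h0] at hk
    simp only [map_zero] at hk
    linear_combination -hk
  have hdual : ∀ x y : A, (∀ ζ : A →ₗ[K] K, ζ x = ζ y) → x = y := by
    intro x y hxy
    have h0 : ∀ φ : Module.Dual K A, φ (x - y) = 0 := by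
      intro φ; simp [map_sub, hxy φ]
    have := (Module.forall_dual_apply_eq_zero_iff K (x - y)).mp h0
    exact sub_eq_zero.mp this
  -- pointwise formula for the dual product
  have hMapp : ∀ (ξ η : A →ₗ[K] K) (y : A),
      M ξ η y =
        η (m (α⁻¹ (α⁻¹ y)) (α⁻¹ (rSharpL r ξ)))
        - η (m (α⁻¹ (rSharpL r ξ)) (α⁻¹ (α⁻¹ y)))
        + ξ (m (α⁻¹ (α⁻¹ y)) (α⁻¹ (rSharpL r η))) := by
    intro ξ η y
    rw [hMdef]
    simp only [LinearMap.sub_apply, LinearMap.comp_apply, LinearMap.flip_apply, adStar,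
      Lstar, Rstar, LinearMap.neg_apply, transposeH_apply, LinearMap.lcomp_apply,
      LinearEquiv.coe_coe, zpow_neg_two_apply]
    ring
  -- T(Φ ζ) = α (T ζ)
  have hTΦ : ∀ ζ : A →ₗ[K] K,
      rSharpL r (transposeH ((α⁻¹ : A ≃ₗ[K] A) : A →ₗ[K] A) ζ) = α (rSharpL r ζ) :=
    fun ζ => hr ζ
  -- O-operator property
  have hO : ∀ ξ η : A →ₗ[K] K,
      rSharpL r (M ξ η) =
        m (rSharpL r ξ) (rSharpL r η) := by
    intro ξ η
    apply hdual
    intro ζ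
    rw [hsymm]
    rw [hMapp]
    have hk := hkey ξ η (ζ ∘ₗ (α : A →ₗ[K] A))
    rw [hTa] at hk
    simp only [LinearMap.comp_apply, LinearEquiv.coe_coe] at hk
    rw [hmul', hinv, hinv] at hk
    linear_combination -hk
  -- scalar pre-Lie instances
  have hPLs : ∀ (μ : A →ₗ[K] K) (x y z : A),
      μ (m (m (α⁻¹ x) (α⁻¹ y)) z) - μ (m x (m (α⁻¹ y) (α⁻¹ z)))
        - μ (m (m (α⁻¹ y) (α⁻¹ x)) z) + μ (m y (m (α⁻¹ x) (α⁻¹ z))) = 0 := by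
    intro μ x y z
    have h1 := hpre (α⁻¹ x) (α⁻¹ y) (α⁻¹ z)
    simp only [LinearEquiv.coe_coe, hinv] at h1
    have h2 := congrArg μ h1
    simp only [map_sub] at h2
    linear_combination h2
  constructor
  · intro ξ η
    apply LinearMap.ext
    intro y
    simp only [transposeH_apply, LinearEquiv.coe_coe, hMapp, hTΦ, hinv', hβm]
  · intro ξ η ζ
    apply LinearMap.ext
    intro y
    simp only [LinearMap.sub_apply]
    simp only [hMapp, hO, hTΦ, transposeH_apply, LinearEquiv.coe_coe, hinv', hβm]
    linear_combination
      hPLs η (α⁻¹ (rSharpL r ξ)) (α⁻¹ (α⁻¹ (α⁻¹ y))) (α⁻¹ (rSharpL r ζ))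
      - hPLs ξ (α⁻¹ (rSharpL r η)) (α⁻¹ (α⁻¹ (α⁻¹ y))) (α⁻¹ (rSharpL r ζ))
      - hPLs ζ (α⁻¹ (rSharpL r ξ)) (α⁻¹ (rSharpL r η)) (α⁻¹ (α⁻¹ (α⁻¹ y)))
      + hPLs ζ (α⁻¹ (rSharpL r ξ)) (α⁻¹ (α⁻¹ (α⁻¹ y))) (α⁻¹ (rSharpL r η))
      - hPLs ζ (α⁻¹ (rSharpL r η)) (α⁻¹ (α⁻¹ (α⁻¹ y))) (α⁻¹ (rSharpL r ξ))
end

section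
/- Let (A,▷,◁,α) be a Hom-L-dendriform algebra. Then: (1) the horizontal product x•y = x▷y + x◁y makes (A,•,α) a Hom-pre-Lie algebra; (2) the vertical product x·y = x▷y − y◁x makes (A,·,α) a Hom-pre-Lie algebra; (3) (A,•,α) and (A,·,α) have the same sub-adjacent Hom-Lie algebra, with bracket [x,y] = x▷y + x◁y − y◁x − y▷x. -/
open TensorProduct LinearMap Module

universe u v

/-! Both Hom-pre-Lie identities are linear combinations of the two Hom-L-dendriform axioms: the horizontal
one of the first axiom at `(x, y, z)` and the second at `(x, y, z)` and `(y, x, z)`, the vertical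
one of the first axiom at `(x, y, z)` and the second at `(y, z, x)` and `(x, z, y)`. Equality of
the two commutators is pure bookkeeping, since `x ◁ y` and `-(y ◁ x)` have the same commutator. -/

section Commutator
variable {R M : Type*} [CommRing R] [AddCommGroup M] [Module R M]

theorem commutator_add_apply (tr tl : M →ₗ[R] M →ₗ[R] M) (x y : M) :
    ((tr + tl) - (tr + tl).flip) x y = tr x y + tl x y - tl y x - tr y x := by
  simp only [LinearMap.sub_apply, LinearMap.add_apply, LinearMap.flip_apply]
  abel

theorem commutator_add_eq_commutator_sub_flip (tr tl : M →ₗ[R] M →ₗ[R] M) :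
    (tr + tl) - (tr + tl).flip = (tr - tl.flip) - (tr - tl.flip).flip := by
  ext x y
  simp only [LinearMap.sub_apply, LinearMap.add_apply, LinearMap.flip_apply]
  abel

end Commutator

namespace IsHomLDendriform
variable {K A : Type*} [Field K] [AddCommGroup A] [Module K A]
  {tr tl : A →ₗ[K] A →ₗ[K] A} {α : A →ₗ[K] A}

theorem isHomPreLie_add (h : IsHomLDendriform tr tl α) : IsHomPreLie (tr + tl) α := by
  obtain ⟨hr, hl, h₁, h₂⟩ := h
  refine ⟨fun x y => ?_, fun x y z => ?_⟩
  · simp only [LinearMap.add_apply, map_add, hr, hl]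
  · simp only [LinearMap.add_apply, map_add]
    linear_combination (norm := module) h₁ x y z + h₂ x y z - h₂ y x z

theorem isHomPreLie_sub_flip (h : IsHomLDendriform tr tl α) :
    IsHomPreLie (tr - tl.flip) α := by
  obtain ⟨hr, hl, h₁, h₂⟩ := h
  refine ⟨fun x y => ?_, fun x y z => ?_⟩
  · simp only [LinearMap.sub_apply, LinearMap.flip_apply, map_sub, hr, hl]
  · simp only [LinearMap.sub_apply, LinearMap.flip_apply, map_sub]
    linear_combination (norm := module) h₁ x y z + h₂ y z x - h₂ x z y

end IsHomLDendriform

theorem stmt_11 {K : Type*} [Field K] {A : Type*} [AddCommGroup A] [Module K A]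
    (tr tl : A →ₗ[K] A →ₗ[K] A) (α : A →ₗ[K] A)
    (h : IsHomLDendriform tr tl α) :
    IsHomPreLie (tr + tl) α ∧
    IsHomPreLie (tr - tl.flip) α ∧
    ((tr + tl) - (tr + tl).flip = (tr - tl.flip) - (tr - tl.flip).flip) ∧
    (∀ x y, ((tr + tl) - (tr + tl).flip) x y
      = tr x y + tl x y - tl y x - tr y x) :=
  ⟨h.isHomPreLie_add, h.isHomPreLie_sub_flip, commutator_add_eq_commutator_sub_flip tr tl,
    commutator_add_apply tr tl⟩
end
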